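/- arXiv:2306.01489 — 7 statements merged into one kernel-verified Lean document; each statement's English description precedes it below -/
import Mathlib

section
/- Let φ : Fin D → ℝ with ∑ i, (φ i)² ≤ A² and (1/2) ∑_{i ≠ j} (φ i − φ j)² ≥ ϑ², and let w : Fin D → ℝ. Then (∑ i, w i · φ i)² ≤ (max_i |w i|)² · (D·A² − ϑ²). -/
open Finset

theorem inner_model_sq_bound {D : ℕ} (hD : 0 < D) (A ϑ : ℝ)
    (φ w : Fin D → ℝ)
    (hpos : ∀ i, 0 ≤ φ i)
    (hnorm : ∑ i, (φ i)^2 ≤ A^2)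
    (hdiv : (1/2) * (∑ i, ∑ j, if i ≠ j then (φ i - φ j)^2 else 0) ≥ ϑ^2) :
    (∑ i, w i * φ i)^2 ≤
      (Finset.univ.sup' ⟨(⟨0, hD⟩ : Fin D), Finset.mem_univ _⟩ (fun i => |w i|))^2
        * ((D : ℝ) * A^2 - ϑ^2) := by
  set M := Finset.univ.sup' ⟨(⟨0, hD⟩ : Fin D), Finset.mem_univ _⟩ (fun i => |w i|) with hMdef
  have hM : ∀ i, |w i| ≤ M := fun i => Finset.le_sup' (fun i => |w i|) (Finset.mem_univ i)
  have hM0 : 0 ≤ M := le_trans (abs_nonneg _) (hM ⟨0, hD⟩)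
  -- step 1: (∑ w φ)^2 ≤ M^2 * (∑ φ)^2
  have habs : |∑ i, w i * φ i| ≤ M * ∑ i, φ i := by
    calc |∑ i, w i * φ i| ≤ ∑ i, |w i * φ i| := Finset.abs_sum_le_sum_abs _ _
      _ ≤ ∑ i, M * φ i := by
          apply Finset.sum_le_sum
          intro i _
          rw [abs_mul, abs_of_nonneg (hpos i)]
          exact mul_le_mul_of_nonneg_right (hM i) (hpos i)
      _ = M * ∑ i, φ i := by rw [Finset.mul_sum]
  have h1 : (∑ i, w i * φ i)^2 ≤ M^2 * (∑ i, φ i)^2 := by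
    rw [← mul_pow]
    calc (∑ i, w i * φ i)^2 = |∑ i, w i * φ i|^2 := (sq_abs _).symm
      _ ≤ (M * ∑ i, φ i)^2 := by
          apply pow_le_pow_left₀ (abs_nonneg _) habs
  -- step 2: identity
  have hid : (∑ i, ∑ j, if i ≠ j then (φ i - φ j)^2 else 0)
      = 2 * D * (∑ i, (φ i)^2) - 2 * (∑ i, φ i)^2 := by
    have hrw : (∑ i, ∑ j, if i ≠ j then (φ i - φ j)^2 else 0)
        = ∑ i, ∑ j, (φ i - φ j)^2 := by
      apply Finset.sum_congr rfl; intro i _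
      apply Finset.sum_congr rfl; intro j _
      by_cases h : i = j <;> simp [h]
    rw [hrw]
    have inner : ∀ i, ∑ j, (φ i - φ j)^2
        = (D : ℝ) * (φ i)^2 + (∑ j, (φ j)^2) - 2 * φ i * (∑ j, φ j) := by
      intro i
      have e : ∀ j, (φ i - φ j)^2 = (φ i)^2 + (φ j)^2 - 2 * φ i * φ j := fun j => by ring
      rw [Finset.sum_congr rfl (fun j _ => e j), Finset.sum_sub_distrib,
        Finset.sum_add_distrib, Finset.sum_const, card_univ, Fintype.card_fin,
        nsmul_eq_mul, ← Finset.mul_sum]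
    rw [Finset.sum_congr rfl (fun i _ => inner i), Finset.sum_sub_distrib,
      Finset.sum_add_distrib, Finset.sum_const, card_univ, Fintype.card_fin,
      nsmul_eq_mul, ← Finset.mul_sum, ← Finset.sum_mul]
    have e2 : ∑ i, (2 : ℝ) * φ i = 2 * ∑ i, φ i := by rw [Finset.mul_sum]
    rw [e2]
    ring
  have h2 : (∑ i, φ i)^2 ≤ (D : ℝ) * A^2 - ϑ^2 := by
    have h3 : (∑ i, φ i)^2 = (D : ℝ) * (∑ i, (φ i)^2)
        - (1/2) * (∑ i, ∑ j, if i ≠ j then (φ i - φ j)^2 else 0) := by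
      rw [hid]; ring
    rw [h3]
    have hDA : (D : ℝ) * (∑ i, (φ i)^2) ≤ (D : ℝ) * A^2 :=
      mul_le_mul_of_nonneg_left hnorm (Nat.cast_nonneg D)
    linarith
  calc (∑ i, w i * φ i)^2 ≤ M^2 * (∑ i, φ i)^2 := h1
    _ ≤ M^2 * ((D : ℝ) * A^2 - ϑ^2) := by
        apply mul_le_mul_of_nonneg_left h2 (sq_nonneg M)
end

section
/- Let φ : Fin D → ℝ with φ i ≥ 0 for all i, ∑ i, (φ i)² ≤ A², and (1/2) ∑_{i ≠ j} (φ i − φ j)² ≥ ϑ². Then for any w : Fin D → ℝ, |∑ i, w i · φ i| ≤ (max_i |w i|) · Real.sqrt (D·A² − ϑ²). -/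
open Finset

theorem inner_model_abs_bound {D : ℕ} (hD : 0 < D) (A ϑ : ℝ)
    (φ : Fin D → ℝ)
    (hpos : ∀ i, 0 ≤ φ i)
    (hnorm : ∑ i, (φ i)^2 ≤ A^2)
    (hdiv : (1/2) * (∑ i, ∑ j, if i ≠ j then (φ i - φ j)^2 else 0) ≥ ϑ^2)
    (w : Fin D → ℝ) :
    |∑ i, w i * φ i| ≤
      (Finset.univ.sup' ⟨(⟨0, hD⟩ : Fin D), Finset.mem_univ _⟩ (fun i => |w i|))
        * Real.sqrt ((D : ℝ) * A^2 - ϑ^2) := by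
  set M := (Finset.univ.sup' ⟨(⟨0, hD⟩ : Fin D), Finset.mem_univ _⟩ (fun i => |w i|)) with hM
  have hMle : ∀ i : Fin D, |w i| ≤ M := fun i =>
    Finset.le_sup' (fun i => |w i|) (Finset.mem_univ i)
  have hM0 : 0 ≤ M := le_trans (abs_nonneg _) (hMle ⟨0, hD⟩)
  set S := ∑ i, φ i with hS
  have hS0 : 0 ≤ S := Finset.sum_nonneg fun i _ => hpos i
  -- the identity
  have hid : (∑ i, ∑ j, if i ≠ j then (φ i - φ j)^2 else 0)
      = 2 * D * (∑ i, (φ i)^2) - 2 * S^2 := by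
    have h1 : (∑ i, ∑ j, if i ≠ j then (φ i - φ j)^2 else 0)
        = ∑ i, ∑ j, (φ i - φ j)^2 := by
      apply Finset.sum_congr rfl; intro i _
      apply Finset.sum_congr rfl; intro j _
      by_cases h : i = j
      · simp [h]
      · simp [h]
    rw [h1]
    have h2 : ∀ i j : Fin D, (φ i - φ j)^2 = (φ i)^2 + (φ j)^2 - 2 * (φ i * φ j) := by
      intro i j; ring
    simp_rw [h2, Finset.sum_sub_distrib, Finset.sum_add_distrib, Finset.sum_const,
      Finset.card_univ, Fintype.card_fin, nsmul_eq_mul, mul_assoc, ← Finset.mul_sum, ← hS]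
    rw [← Finset.sum_mul, ← hS, sq]
    ring
  have hSsq : S^2 ≤ (D : ℝ) * A^2 - ϑ^2 := by
    have : ϑ^2 ≤ (D : ℝ) * (∑ i, (φ i)^2) - S^2 := by
      have := hdiv
      rw [hid] at this
      linarith
    have hD2 : (D : ℝ) * (∑ i, (φ i)^2) ≤ (D : ℝ) * A^2 :=
      mul_le_mul_of_nonneg_left hnorm (Nat.cast_nonneg D)
    linarith
  have hSle : S ≤ Real.sqrt ((D : ℝ) * A^2 - ϑ^2) := by
    rw [show S = Real.sqrt (S^2) from (Real.sqrt_sq hS0).symm]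
    exact Real.sqrt_le_sqrt hSsq
  calc |∑ i, w i * φ i| ≤ ∑ i, |w i * φ i| := Finset.abs_sum_le_sum_abs _ _
    _ ≤ ∑ i, M * φ i := by
        apply Finset.sum_le_sum; intro i _
        rw [abs_mul, abs_of_nonneg (hpos i)]
        exact mul_le_mul_of_nonneg_right (hMle i) (hpos i)
    _ = M * S := by rw [← Finset.mul_sum]
    _ ≤ M * Real.sqrt ((D : ℝ) * A^2 - ϑ^2) :=
        mul_le_mul_of_nonneg_left hSle hM0
end

section
/- Let φ : Fin D → ℝ with φ i ≥ 0, ∑ i, (φ i)² ≤ A², (1/2) ∑_{i ≠ j} (φ i − φ j)² ≥ ϑ², w : Fin D → ℝ, and y ∈ ℝ with |y| ≤ B. Then (1/2)·(∑ i, w i · φ i − y)² ≤ (1/2)·((max_i |w i|)·Real.sqrt(D·A² − ϑ²) + B)². -/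
open Finset

theorem l2_regression_energy_bound {D : ℕ} (hD : 0 < D) (A ϑ B : ℝ)
    (φ : Fin D → ℝ)
    (hpos : ∀ i, 0 ≤ φ i)
    (hnorm : ∑ i, (φ i)^2 ≤ A^2)
    (hdiv : (1/2) * (∑ i, ∑ j, if i ≠ j then (φ i - φ j)^2 else 0) ≥ ϑ^2)
    (w : Fin D → ℝ) (y : ℝ) (hy : |y| ≤ B) :
    (1/2) * (∑ i, w i * φ i - y)^2 ≤
      (1/2) * ((Finset.univ.sup' ⟨(⟨0, hD⟩ : Fin D), Finset.mem_univ _⟩ (fun i => |w i|))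
        * Real.sqrt ((D : ℝ) * A^2 - ϑ^2) + B)^2 := by
  set M := Finset.univ.sup' ⟨(⟨0, hD⟩ : Fin D), Finset.mem_univ _⟩ (fun i => |w i|) with hM
  set S := ∑ i, φ i with hSdef
  have hMnn : 0 ≤ M := le_trans (abs_nonneg (w ⟨0, hD⟩))
    (Finset.le_sup' (fun i => |w i|) (Finset.mem_univ (⟨0, hD⟩ : Fin D)))
  have hSnn : 0 ≤ S := Finset.sum_nonneg fun i _ => hpos i
  -- identity: double sum equals 2 * (D * ∑ φ² - S²)
  have hident : (∑ i, ∑ j, if i ≠ j then (φ i - φ j)^2 else 0)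
      = 2 * ((D : ℝ) * ∑ i, (φ i)^2 - S^2) := by
    have h1 : (∑ i, ∑ j, if i ≠ j then (φ i - φ j)^2 else 0)
        = ∑ i, ∑ j, (φ i - φ j)^2 := by
      refine Finset.sum_congr rfl fun i _ => Finset.sum_congr rfl fun j _ => ?_
      by_cases h : i = j
      · simp [h]
      · simp [h]
    rw [h1]
    have h2 : ∀ i j : Fin D, (φ i - φ j)^2 = (φ i)^2 - 2*(φ i * φ j) + (φ j)^2 := by
      intros; ring
    simp only [h2, Finset.sum_add_distrib, Finset.sum_sub_distrib, Finset.sum_const,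
      Finset.card_univ, Fintype.card_fin, nsmul_eq_mul, ← Finset.mul_sum, ← Finset.sum_mul]
    rw [hSdef]
    rw [show (∑ i, φ i) ^ 2 = (∑ i, φ i) * (∑ i, φ i) from sq _]
    ring
  have hS2 : S^2 ≤ (D : ℝ) * A^2 - ϑ^2 := by
    have := hdiv
    rw [hident] at this
    have hDpos : (0:ℝ) < D := by exact_mod_cast hD
    nlinarith [hnorm]
  have hsqnn : (0:ℝ) ≤ (D : ℝ) * A^2 - ϑ^2 := le_trans (sq_nonneg S) hS2
  have hSsqrt : S ≤ Real.sqrt ((D : ℝ) * A^2 - ϑ^2) := (Real.le_sqrt hSnn hsqnn).mpr hS2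
  have hsum : |∑ i, w i * φ i| ≤ M * S := by
    calc |∑ i, w i * φ i| ≤ ∑ i, |w i * φ i| := Finset.abs_sum_le_sum_abs _ _
      _ ≤ ∑ i, M * φ i := by
          refine Finset.sum_le_sum fun i _ => ?_
          rw [abs_mul, abs_of_nonneg (hpos i)]
          exact mul_le_mul_of_nonneg_right
            (Finset.le_sup' (fun i => |w i|) (Finset.mem_univ i)) (hpos i)
      _ = M * S := by rw [← Finset.mul_sum]
  have habs : |∑ i, w i * φ i - y| ≤ M * Real.sqrt ((D : ℝ) * A^2 - ϑ^2) + B := by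
    calc |∑ i, w i * φ i - y| ≤ |∑ i, w i * φ i| + |y| := abs_sub _ _
      _ ≤ M * S + B := add_le_add hsum hy
      _ ≤ M * Real.sqrt ((D : ℝ) * A^2 - ϑ^2) + B := by
          gcongr
  have hsq := sq_le_sq' (neg_le_of_abs_le habs) (le_of_abs_le habs)
  linarith
end

section
/- Let φ : Fin D → ℝ with φ i ≥ 0, ∑ i, (φ i)² ≤ A², (1/2) ∑_{i ≠ j} (φ i − φ j)² ≥ ϑ², w : Fin D → ℝ, and y ∈ ℝ with |y| ≤ B. Then |∑ i, w i · φ i − y| ≤ (max_i |w i|)·Real.sqrt(D·A² − ϑ²) + B. -/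
/-! Half the sum of squared pairwise differences equals `D ∑ φᵢ² - (∑ φᵢ)²`, so the hypotheses
give `(∑ φᵢ)² ≤ D A² - ϑ²`; since `φ ≥ 0`, `|∑ wᵢ φᵢ| ≤ (maxᵢ |wᵢ|) ∑ φᵢ`, and `|y| ≤ B` finishes. -/

open Finset

section PairwiseSpread

variable {ι : Type*} [Fintype ι] [DecidableEq ι]

theorem sum_sum_ite_ne_sub_sq (f : ι → ℝ) :
    (∑ i, ∑ j, if i ≠ j then (f i - f j) ^ 2 else 0)
      = 2 * (Fintype.card ι * ∑ i, f i ^ 2 - (∑ i, f i) ^ 2) := by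
  have hdiag : (∑ i, ∑ j, if i ≠ j then (f i - f j) ^ 2 else 0)
      = ∑ i, ∑ j, (f i - f j) ^ 2 := by
    refine sum_congr rfl fun i _ => sum_congr rfl fun j _ => ?_
    by_cases h : i = j <;> simp [h]
  have hexpand : ∀ i j, (f i - f j) ^ 2 = f i ^ 2 - 2 * (f i * f j) + f j ^ 2 := fun i j => by
    ring
  rw [hdiag]
  simp only [hexpand, sum_add_distrib, sum_sub_distrib, sum_const, card_univ,
    nsmul_eq_mul, ← mul_sum, ← sum_mul]
  ring

theorem sum_le_sqrt_of_sum_sq_le_of_pairwise_spread {f : ι → ℝ} {A ϑ : ℝ}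
    (hnorm : ∑ i, f i ^ 2 ≤ A ^ 2)
    (hspread : ϑ ^ 2 ≤ (1 / 2) * ∑ i, ∑ j, if i ≠ j then (f i - f j) ^ 2 else 0) :
    ∑ i, f i ≤ √(Fintype.card ι * A ^ 2 - ϑ ^ 2) := by
  rw [sum_sum_ite_ne_sub_sq] at hspread
  refine Real.le_sqrt_of_sq_le ?_
  have hscaled := mul_le_mul_of_nonneg_left hnorm (Nat.cast_nonneg (α := ℝ) (Fintype.card ι))
  linarith

end PairwiseSpread

theorem abs_sum_mul_le_of_abs_le {ι : Type*} (s : Finset ι) {w φ : ι → ℝ} {M : ℝ}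
    (hφ : ∀ i ∈ s, 0 ≤ φ i) (hw : ∀ i ∈ s, |w i| ≤ M) :
    |∑ i ∈ s, w i * φ i| ≤ M * ∑ i ∈ s, φ i := by
  rw [mul_sum]
  refine (abs_sum_le_sum_abs _ _).trans (sum_le_sum fun i hi => ?_)
  rw [abs_mul, abs_of_nonneg (hφ i hi)]
  exact mul_le_mul_of_nonneg_right (hw i hi) (hφ i hi)

theorem l1_regression_energy_bound {D : ℕ} (hD : 0 < D) (A ϑ B : ℝ)
    (φ : Fin D → ℝ)
    (hpos : ∀ i, 0 ≤ φ i)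
    (hnorm : ∑ i, (φ i)^2 ≤ A^2)
    (hdiv : (1/2) * (∑ i, ∑ j, if i ≠ j then (φ i - φ j)^2 else 0) ≥ ϑ^2)
    (w : Fin D → ℝ) (y : ℝ) (hy : |y| ≤ B) :
    |∑ i, w i * φ i - y| ≤
      (Finset.univ.sup' ⟨(⟨0, hD⟩ : Fin D), Finset.mem_univ _⟩ (fun i => |w i|))
        * Real.sqrt ((D : ℝ) * A^2 - ϑ^2) + B := by
  set M := univ.sup' ⟨(⟨0, hD⟩ : Fin D), mem_univ _⟩ fun i => |w i|
  have hM : ∀ i ∈ univ, |w i| ≤ M := fun i hi => le_sup' (fun i => |w i|) hi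
  have hM0 : 0 ≤ M := (abs_nonneg _).trans (hM _ (mem_univ ⟨0, hD⟩))
  have hsum : ∑ i, φ i ≤ √((D : ℝ) * A ^ 2 - ϑ ^ 2) := by
    simpa using sum_le_sqrt_of_sum_sq_le_of_pairwise_spread hnorm hdiv
  calc |∑ i, w i * φ i - y| ≤ |∑ i, w i * φ i| + |y| := abs_sub _ _
    _ ≤ M * ∑ i, φ i + B := add_le_add (abs_sum_mul_le_of_abs_le _ (fun i _ => hpos i) hM) hy
    _ ≤ M * √((D : ℝ) * A ^ 2 - ϑ ^ 2) + B := by gcongr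
end

section
/- Let φ : Fin D → ℝ with φ i ≥ 0, ∑ i, (φ i)² ≤ A², (1/2) ∑_{i ≠ j} (φ i − φ j)² ≥ ϑ², w : Fin D → ℝ, and y ∈ {−1, 1}. Then |−y · ∑ i, w i · φ i| ≤ (max_i |w i|)·Real.sqrt(D·A² − ϑ²). -/
open Finset

theorem classification_energy_bound {D : ℕ} (hD : 0 < D) (A ϑ : ℝ)
    (φ : Fin D → ℝ)
    (hpos : ∀ i, 0 ≤ φ i)
    (hnorm : ∑ i, (φ i)^2 ≤ A^2)
    (hdiv : (1/2) * (∑ i, ∑ j, if i ≠ j then (φ i - φ j)^2 else 0) ≥ ϑ^2)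
    (w : Fin D → ℝ) (y : ℝ) (hy : y = -1 ∨ y = 1) :
    |(-y) * ∑ i, w i * φ i| ≤
      (Finset.univ.sup' ⟨(⟨0, hD⟩ : Fin D), Finset.mem_univ _⟩ (fun i => |w i|))
        * Real.sqrt ((D : ℝ) * A^2 - ϑ^2) := by
  set M := (Finset.univ.sup' ⟨(⟨0, hD⟩ : Fin D), Finset.mem_univ _⟩ (fun i => |w i|)) with hM
  have hMge : ∀ i : Fin D, |w i| ≤ M := fun i =>
    Finset.le_sup' (fun i => |w i|) (Finset.mem_univ i)
  have hM0 : 0 ≤ M := le_trans (abs_nonneg _) (hMge ⟨0, hD⟩)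
  have h0 : ∀ i j : Fin D, (if i ≠ j then (φ i - φ j)^2 else 0) = (φ i - φ j)^2 := by
    intro i j; by_cases h : i = j <;> simp [h]
  have key : (∑ i, ∑ j, if i ≠ j then (φ i - φ j)^2 else 0)
      = 2*(D:ℝ)*(∑ i, (φ i)^2) - 2*(∑ i, φ i)^2 := by
    simp_rw [h0]
    have expand : ∀ i j : Fin D, (φ i - φ j)^2 = φ i^2 - 2*(φ i * φ j) + φ j^2 := by
      intro i j; ring
    simp_rw [expand, Finset.sum_add_distrib, Finset.sum_sub_distrib,
      Finset.sum_const, ← Finset.mul_sum, ← Finset.sum_mul, Finset.card_univ,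
      Fintype.card_fin, nsmul_eq_mul]
    rw [← Finset.mul_sum]
    ring
  have hDA : (D:ℝ) * (∑ i, (φ i)^2) ≤ (D:ℝ) * A^2 :=
    mul_le_mul_of_nonneg_left hnorm (by positivity)
  have hsq : (∑ i, φ i)^2 ≤ (D:ℝ)*A^2 - ϑ^2 := by
    rw [key] at hdiv; linarith
  have hφ0 : 0 ≤ ∑ i, φ i := Finset.sum_nonneg fun i _ => hpos i
  have hsum : ∑ i, φ i ≤ Real.sqrt ((D:ℝ)*A^2 - ϑ^2) := by
    have := Real.sqrt_le_sqrt hsq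
    rwa [Real.sqrt_sq hφ0] at this
  have hy1 : |(-y)| = 1 := by rcases hy with h | h <;> simp [h]
  calc |(-y) * ∑ i, w i * φ i| = |∑ i, w i * φ i| := by
        rw [abs_mul, hy1, one_mul]
    _ ≤ ∑ i, |w i * φ i| := Finset.abs_sum_le_sum_abs _ _
    _ ≤ ∑ i, M * φ i := by
        refine Finset.sum_le_sum fun i _ => ?_
        rw [abs_mul, abs_of_nonneg (hpos i)]
        exact mul_le_mul_of_nonneg_right (hMge i) (hpos i)
    _ = M * ∑ i, φ i := by rw [Finset.mul_sum]
    _ ≤ M * Real.sqrt ((D:ℝ)*A^2 - ϑ^2) := mul_le_mul_of_nonneg_left hsum hM0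
end

section
/- Let φ¹ : Fin D₁ → ℝ and φ² : Fin D₂ → ℝ be nonnegative with ∑ i,(φ¹ i)² ≤ A₁², ∑ i,(φ² i)² ≤ A₂², (1/2)∑_{i≠j}(φ¹ i − φ¹ j)² ≥ ϑ₁², (1/2)∑_{i≠j}(φ² i − φ² j)² ≥ ϑ₂², and let w¹ : Fin D₁ → ℝ, w² : Fin D₂ → ℝ. Then (1/2)·(∑ i, w¹ i·φ¹ i − ∑ i, w² i·φ² i)² ≤ J₁ + J₂, where J₁ = (max_i |w¹ i|)²·(D₁·A₁² − ϑ₁²) and J₂ = (max_i |w² i|)²·(D₂·A₂² − ϑ₂²). -/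
open Finset

lemma implicit_aux {D : ℕ} (hD : 0 < D) (A ϑ : ℝ) (φ w : Fin D → ℝ)
    (hpos : ∀ i, 0 ≤ φ i) (hnorm : ∑ i, (φ i)^2 ≤ A^2)
    (hdiv : (1/2) * (∑ i, ∑ j, if i ≠ j then (φ i - φ j)^2 else 0) ≥ ϑ^2)
    (W : ℝ) (hW : ∀ i, |w i| ≤ W) :
    (∑ i, w i * φ i)^2 ≤ W^2 * ((D : ℝ) * A^2 - ϑ^2) := by
  have hWnn : 0 ≤ W := le_trans (abs_nonneg _) (hW ⟨0, hD⟩)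
  have habs : |∑ i, w i * φ i| ≤ W * ∑ i, φ i := by
    calc |∑ i, w i * φ i| ≤ ∑ i, |w i * φ i| := Finset.abs_sum_le_sum_abs _ _
      _ ≤ ∑ i, W * φ i := by
          apply Finset.sum_le_sum
          intro i _
          rw [abs_mul, abs_of_nonneg (hpos i)]
          exact mul_le_mul_of_nonneg_right (hW i) (hpos i)
      _ = W * ∑ i, φ i := by rw [Finset.mul_sum]
  have h2 : (∑ i, w i * φ i)^2 ≤ (W * ∑ i, φ i)^2 := by
    rw [← sq_abs (∑ i, w i * φ i)]
    apply pow_le_pow_left₀ (abs_nonneg _) habs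
  have hid : (∑ i, ∑ j, if i ≠ j then (φ i - φ j)^2 else 0)
      = 2 * (D : ℝ) * (∑ i, (φ i)^2) - 2 * (∑ i, φ i)^2 := by
    have h1 : ∀ i : Fin D, (∑ j, if i ≠ j then (φ i - φ j)^2 else 0)
        = ∑ j, (φ i - φ j)^2 := by
      intro i
      apply Finset.sum_congr rfl
      intro j _
      split_ifs with h
      · rfl
      · simp [not_not.mp h]
    have h2 : ∀ i : Fin D, ∑ j, (φ i - φ j)^2
        = (D : ℝ) * φ i^2 - 2 * φ i * (∑ j, φ j) + ∑ j, (φ j)^2 := by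
      intro i
      have : ∀ j, (φ i - φ j)^2 = φ i^2 - 2 * φ i * φ j + φ j^2 := fun j => by ring
      simp_rw [this]
      rw [Finset.sum_add_distrib, Finset.sum_sub_distrib, Finset.sum_const,
        ← Finset.mul_sum]
      simp [Fintype.card_fin]
    simp_rw [h1, h2]
    rw [Finset.sum_add_distrib, Finset.sum_sub_distrib, Finset.sum_const,
      ← Finset.mul_sum, ← Finset.sum_mul]
    simp [Fintype.card_fin]
    rw [show (∑ x : Fin D, 2 * φ x) = 2 * ∑ x, φ x from by rw [Finset.mul_sum]]
    ring
  have hsq : (∑ i, φ i)^2 ≤ (D : ℝ) * A^2 - ϑ^2 := by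
    rw [hid] at hdiv
    nlinarith [Finset.sum_nonneg (fun i (_ : i ∈ Finset.univ) => sq_nonneg (φ i))]
  calc (∑ i, w i * φ i)^2 ≤ (W * ∑ i, φ i)^2 := h2
    _ = W^2 * (∑ i, φ i)^2 := by ring
    _ ≤ W^2 * ((D : ℝ) * A^2 - ϑ^2) := by
        exact mul_le_mul_of_nonneg_left hsq (sq_nonneg W)

theorem implicit_regression_energy_bound {D₁ D₂ : ℕ} (hD₁ : 0 < D₁) (hD₂ : 0 < D₂)
    (A₁ A₂ ϑ₁ ϑ₂ : ℝ)
    (φ₁ : Fin D₁ → ℝ) (φ₂ : Fin D₂ → ℝ)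
    (hpos₁ : ∀ i, 0 ≤ φ₁ i) (hpos₂ : ∀ i, 0 ≤ φ₂ i)
    (hnorm₁ : ∑ i, (φ₁ i)^2 ≤ A₁^2) (hnorm₂ : ∑ i, (φ₂ i)^2 ≤ A₂^2)
    (hdiv₁ : (1/2) * (∑ i, ∑ j, if i ≠ j then (φ₁ i - φ₁ j)^2 else 0) ≥ ϑ₁^2)
    (hdiv₂ : (1/2) * (∑ i, ∑ j, if i ≠ j then (φ₂ i - φ₂ j)^2 else 0) ≥ ϑ₂^2)
    (w₁ : Fin D₁ → ℝ) (w₂ : Fin D₂ → ℝ) :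
    (1/2) * (∑ i, w₁ i * φ₁ i - ∑ i, w₂ i * φ₂ i)^2 ≤
      (Finset.univ.sup' ⟨(⟨0, hD₁⟩ : Fin D₁), Finset.mem_univ _⟩ (fun i => |w₁ i|))^2
        * ((D₁ : ℝ) * A₁^2 - ϑ₁^2)
      + (Finset.univ.sup' ⟨(⟨0, hD₂⟩ : Fin D₂), Finset.mem_univ _⟩ (fun i => |w₂ i|))^2
        * ((D₂ : ℝ) * A₂^2 - ϑ₂^2) := by
  have hb₁ := implicit_aux hD₁ A₁ ϑ₁ φ₁ w₁ hpos₁ hnorm₁ hdiv₁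
    (Finset.univ.sup' ⟨(⟨0, hD₁⟩ : Fin D₁), Finset.mem_univ _⟩ (fun i => |w₁ i|))
    (fun i => Finset.le_sup' (fun i => |w₁ i|) (Finset.mem_univ i))
  have hb₂ := implicit_aux hD₂ A₂ ϑ₂ φ₂ w₂ hpos₂ hnorm₂ hdiv₂
    (Finset.univ.sup' ⟨(⟨0, hD₂⟩ : Fin D₂), Finset.mem_univ _⟩ (fun i => |w₂ i|))
    (fun i => Finset.le_sup' (fun i => |w₂ i|) (Finset.mem_univ i))
  nlinarith [sq_nonneg ((∑ i, w₁ i * φ₁ i) + (∑ i, w₂ i * φ₂ i))]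
end

section
/- Let X be a set, φ : Fin D → X → ℝ with φ i x ≥ 0 for all i, x, and suppose for all x: ∑ i, (φ i x)² ≤ A². Suppose further that for all x, (1/2)∑_{i≠j}(φ i x − φ j x)² ≥ ϑ². Then for every w : Fin D → ℝ with max_i |w i| ≤ W, the function g(x) = ∑ i, w i · φ i x satisfies sup_x |g(x)| ≤ W·Real.sqrt(D·A² − ϑ²). -/
open Finset

theorem hypothesis_class_sup_bound {X : Type*} {D : ℕ} (hD : 0 < D) (A ϑ W : ℝ)
    (φ : Fin D → X → ℝ)
    (hpos : ∀ i x, 0 ≤ φ i x)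
    (hnorm : ∀ x, ∑ i, (φ i x)^2 ≤ A^2)
    (hdiv : ∀ x, (1/2) * (∑ i, ∑ j, if i ≠ j then (φ i x - φ j x)^2 else 0) ≥ ϑ^2)
    (w : Fin D → ℝ)
    (hw : (Finset.univ.sup' ⟨(⟨0, hD⟩ : Fin D), Finset.mem_univ _⟩ (fun i => |w i|)) ≤ W) :
    ∀ x, |∑ i, w i * φ i x| ≤ W * Real.sqrt ((D : ℝ) * A^2 - ϑ^2) := by
  intro x
  set S : ℝ := ∑ i, φ i x with hS
  have hW0 : 0 ≤ W := le_trans (abs_nonneg (w ⟨0, hD⟩))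
    (le_trans (Finset.le_sup' (fun i => |w i|) (Finset.mem_univ _)) hw)
  have hwi : ∀ i, |w i| ≤ W := fun i =>
    le_trans (Finset.le_sup' (fun i => |w i|) (Finset.mem_univ i)) hw
  have hSnn : 0 ≤ S := Finset.sum_nonneg fun i _ => hpos i x
  -- key identity
  have key : ∑ i, ∑ j, (if i ≠ j then (φ i x - φ j x)^2 else 0)
      = 2 * ((D : ℝ) * ∑ i, (φ i x)^2 - S^2) := by
    have h1 : ∑ i, ∑ j, (if i ≠ j then (φ i x - φ j x)^2 else 0)
        = ∑ i, ∑ j, (φ i x - φ j x)^2 := by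
      refine Finset.sum_congr rfl fun i _ => Finset.sum_congr rfl fun j _ => ?_
      by_cases h : i = j
      · simp [h]
      · simp [h]
    rw [h1]
    have : ∀ i j : Fin D, (φ i x - φ j x)^2
        = (φ i x)^2 + (φ j x)^2 - 2 * (φ i x * φ j x) := by intros; ring
    simp only [this, Finset.sum_sub_distrib, Finset.sum_add_distrib,
      Finset.sum_const, Finset.card_univ, Fintype.card_fin, ← Finset.mul_sum,
      ← Finset.sum_mul, nsmul_eq_mul]
    rw [hS]
    ring
  have hSsq : S^2 ≤ (D : ℝ) * A^2 - ϑ^2 := by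
    have h2 := hdiv x
    rw [key] at h2
    have hn := hnorm x
    have hDnn : (0:ℝ) ≤ D := Nat.cast_nonneg D
    nlinarith
  have hSle : S ≤ Real.sqrt ((D : ℝ) * A^2 - ϑ^2) := by
    have := Real.sqrt_le_sqrt hSsq
    rwa [Real.sqrt_sq hSnn] at this
  calc |∑ i, w i * φ i x| ≤ ∑ i, |w i * φ i x| := Finset.abs_sum_le_sum_abs _ _
    _ ≤ ∑ i, W * φ i x := by
        refine Finset.sum_le_sum fun i _ => ?_
        rw [abs_mul, abs_of_nonneg (hpos i x)]
        exact mul_le_mul_of_nonneg_right (hwi i) (hpos i x)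
    _ = W * S := by rw [← Finset.mul_sum]
    _ ≤ W * Real.sqrt ((D : ℝ) * A^2 - ϑ^2) := mul_le_mul_of_nonneg_left hSle hW0
end
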